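/- arXiv:math/0403470 — 5 statements merged into one kernel-verified Lean document; each statement's English description precedes it below -/
import Mathlib

section
/- Let G be a group, ρ : G → SU(2) a representation, and d : G → su(2) an (Ad∘ρ)-twisted derivation. If g, g' ∈ G are conjugate and ρ(g) ≠ ±1 (hence ρ(g') ≠ ±1), then ⟨d(g), P^ρ(g)⟩ = ⟨d(g'), P^ρ(g')⟩, where P^ρ(g) is the unique P ∈ S² with ρ(g) = cos(θ) + sin(θ)P for θ ∈ (0,π). -/
open Matrix

/-- The scalar product `⟨x,y⟩ = -½ Tr(xy)` on `su(2)`. -/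
noncomputable def ip (x y : Matrix (Fin 2) (Fin 2) ℂ) : ℝ :=
  -(1 / 2) * ((x * y).trace).re

/-- The adjoint action `Ad_A(x) = A x A⁻¹`. -/
noncomputable def Ad (A x : Matrix (Fin 2) (Fin 2) ℂ) : Matrix (Fin 2) (Fin 2) ℂ :=
  A * x * A⁻¹

/-- An `(Ad ∘ ρ)`-twisted derivation: an `su(2)`-valued map satisfying the cocycle
condition `d(g₁g₂) = d(g₁) + Ad_{ρ(g₁)}(d(g₂))`. -/
def IsDerivation {G : Type} [Group G] (ρ : G →* Matrix (Fin 2) (Fin 2) ℂ)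
    (d : G → Matrix (Fin 2) (Fin 2) ℂ) : Prop :=
  (∀ g, (d g)ᴴ = -(d g) ∧ (d g).trace = 0) ∧
  ∀ g₁ g₂, d (g₁ * g₂) = d g₁ + Ad (ρ g₁) (d g₂)

/-- Key trace identity. -/
lemma key_trace (A Ai B Bi X Y P : Matrix (Fin 2) (Fin 2) ℂ)
    (hA1 : A * Ai = 1) (hA2 : Ai * A = 1) (hB1 : B * Bi = 1) (hB2 : Bi * B = 1)
    (hBP : B * P = P * B) :
    ((Y + A * X * Ai + (A * B) * (Ai * (-Y) * A) * (Bi * Ai)) * (A * P * Ai)).trace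
      = (X * P).trace := by
  have cA : ∀ Z, Ai * (A * Z) = Z := fun Z => by rw [← Matrix.mul_assoc, hA2, Matrix.one_mul]
  have cB : ∀ Z, Bi * (B * Z) = Z := fun Z => by rw [← Matrix.mul_assoc, hB2, Matrix.one_mul]
  have hBiP : Bi * P = P * Bi := by
    calc Bi * P = Bi * P * (B * Bi) := by rw [hB1, Matrix.mul_one]
      _ = Bi * (P * B) * Bi := by simp only [Matrix.mul_assoc]
      _ = Bi * (B * P) * Bi := by rw [hBP]
      _ = P * Bi := by rw [← Matrix.mul_assoc Bi B P, hB2, Matrix.one_mul]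
  have hc : ∀ Z, Bi * (P * Z) = P * (Bi * Z) := fun Z => by
    rw [← Matrix.mul_assoc, hBiP, Matrix.mul_assoc]
  have e2 : (A * X * Ai) * (A * P * Ai) = A * (X * P) * Ai := by
    simp [Matrix.mul_assoc, cA]
  have e3 : ((A * B) * (Ai * (-Y) * A) * (Bi * Ai) * (A * P * Ai)).trace
      = (-(Y * (A * P * Ai))).trace := by
    have hsplit : (A * B) * (Ai * (-Y) * A) * (Bi * Ai) * (A * P * Ai)
        = (A * (B * Ai)) * ((-Y) * (A * (P * (Bi * Ai)))) := by
      simp [Matrix.mul_assoc, cA, hc]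
    rw [hsplit, Matrix.trace_mul_comm]
    have h4 : ((-Y) * (A * (P * (Bi * Ai)))) * (A * (B * Ai)) = -(Y * (A * P * Ai)) := by
      simp [Matrix.mul_assoc, cA, cB, hc]
    rw [h4]
  have trConj : ∀ Z, (A * Z * Ai).trace = Z.trace := fun Z => by
    rw [Matrix.trace_mul_cycle, hA2, Matrix.one_mul]
  rw [Matrix.add_mul, Matrix.add_mul, Matrix.trace_add, Matrix.trace_add, e3, e2, trConj]
  simp

/-- for a twisted derivation `d` and conjugate elements `g, g' = hgh⁻¹` with
`ρ(g) ≠ ±1`, one has `⟨d(g), P^ρ(g)⟩ = ⟨d(g'), P^ρ(g')⟩`, where `P^ρ(g)` is the axis of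
`ρ(g) = cos θ + sin θ · P^ρ(g)`, `θ ∈ (0,π)`. -/
theorem stmt_5 {G : Type} [Group G] (ρ : G →* Matrix (Fin 2) (Fin 2) ℂ)
    (hρ : ∀ g, ρ g ∈ Matrix.specialUnitaryGroup (Fin 2) ℂ)
    (d : G → Matrix (Fin 2) (Fin 2) ℂ) (hd : IsDerivation ρ d)
    (g g' h : G) (hconj : g' = h * g * h⁻¹)
    (hg1 : ρ g ≠ 1) (hg2 : ρ g ≠ -1)
    (θ θ' : ℝ) (hθ : θ ∈ Set.Ioo (0 : ℝ) Real.pi) (hθ' : θ' ∈ Set.Ioo (0 : ℝ) Real.pi)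
    (P P' : Matrix (Fin 2) (Fin 2) ℂ)
    (hP : P ∈ Matrix.specialUnitaryGroup (Fin 2) ℂ) (hPtr : P.trace = 0)
    (hP' : P' ∈ Matrix.specialUnitaryGroup (Fin 2) ℂ) (hP'tr : P'.trace = 0)
    (hdec : ρ g = (Real.cos θ : ℂ) • (1 : Matrix (Fin 2) (Fin 2) ℂ) + (Real.sin θ : ℂ) • P)
    (hdec' : ρ g' = (Real.cos θ' : ℂ) • (1 : Matrix (Fin 2) (Fin 2) ℂ) + (Real.sin θ' : ℂ) • P') :
    ip (d g) P = ip (d g') P' := by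
  obtain ⟨_, hcoc⟩ := hd
  have hdetA : IsUnit (ρ h).det := by
    rw [(Matrix.mem_specialUnitaryGroup_iff.mp (hρ h)).2]; exact isUnit_one
  have hdetB : IsUnit (ρ g).det := by
    rw [(Matrix.mem_specialUnitaryGroup_iff.mp (hρ g)).2]; exact isUnit_one
  have hA1 : ρ h * (ρ h)⁻¹ = 1 := Matrix.mul_nonsing_inv _ hdetA
  have hA2 : (ρ h)⁻¹ * ρ h = 1 := Matrix.nonsing_inv_mul _ hdetA
  have hB1 : ρ g * (ρ g)⁻¹ = 1 := Matrix.mul_nonsing_inv _ hdetB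
  have hB2 : (ρ g)⁻¹ * ρ g = 1 := Matrix.nonsing_inv_mul _ hdetB
  have hρinv : ρ h⁻¹ = (ρ h)⁻¹ := by
    refine (Matrix.inv_eq_right_inv ?_).symm
    rw [← _root_.map_mul ρ h h⁻¹, mul_inv_cancel]; exact MonoidHom.map_one ρ
  have hρg' : ρ g' = ρ h * ρ g * (ρ h)⁻¹ := by
    rw [hconj, _root_.map_mul ρ (h * g) h⁻¹, _root_.map_mul ρ h g, hρinv]
  -- θ = θ'
  have htr : (ρ g').trace = (ρ g).trace := by
    rw [hρg', Matrix.trace_mul_cycle, hA2, Matrix.one_mul]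
  have hcosC : (Real.cos θ' : ℂ) = (Real.cos θ : ℂ) := by
    rw [hdec, hdec'] at htr
    simp only [Matrix.trace_add, Matrix.trace_smul, Matrix.trace_one, hPtr, hP'tr,
      smul_zero, mul_zero, add_zero, smul_eq_mul, Fintype.card_fin, Nat.cast_ofNat] at htr
    exact mul_right_cancel₀ two_ne_zero htr
  have hcos : Real.cos θ = Real.cos θ' := by exact_mod_cast hcosC.symm
  have hθθ' : θ = θ' :=
    Real.injOn_cos ⟨hθ.1.le, hθ.2.le⟩ ⟨hθ'.1.le, hθ'.2.le⟩ hcos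
  subst hθθ'
  have hsin : (Real.sin θ : ℂ) ≠ 0 := by
    exact_mod_cast (Real.sin_pos_of_pos_of_lt_pi hθ.1 hθ.2).ne'
  -- P' = A P A⁻¹
  have hPP' : P' = ρ h * P * (ρ h)⁻¹ := by
    have h1 : ρ g' = (Real.cos θ : ℂ) • (1 : Matrix (Fin 2) (Fin 2) ℂ)
        + (Real.sin θ : ℂ) • (ρ h * P * (ρ h)⁻¹) := by
      rw [hρg', hdec]
      simp only [Matrix.mul_add, Matrix.add_mul, Matrix.mul_smul, Matrix.smul_mul,
        Matrix.mul_one]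
      rw [hA1]
    rw [hdec'] at h1
    have h2 : (Real.sin θ : ℂ) • P' = (Real.sin θ : ℂ) • (ρ h * P * (ρ h)⁻¹) :=
      add_left_cancel h1
    exact smul_right_injective (Matrix (Fin 2) (Fin 2) ℂ) hsin h2
  -- ρ g commutes with P
  have hBP : ρ g * P = P * ρ g := by
    rw [hdec]
    simp [Matrix.add_mul, Matrix.mul_add, Matrix.smul_mul, Matrix.mul_smul]
  -- d 1 = 0
  have hd1 : d 1 = 0 := by
    have h0 := hcoc 1 1
    simp [Ad] at h0
    exact h0
  -- d h⁻¹
  have conjfix : ∀ Z, (ρ h)⁻¹ * (ρ h * Z * (ρ h)⁻¹) * ρ h = Z := fun Z => by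
    simp only [Matrix.mul_assoc]
    rw [hA2, Matrix.mul_one, ← Matrix.mul_assoc, hA2, Matrix.one_mul]
  have hdinv : d h⁻¹ = (ρ h)⁻¹ * (-(d h)) * ρ h := by
    have h0 := hcoc h h⁻¹
    rw [mul_inv_cancel, hd1] at h0
    have h1 : ρ h * d h⁻¹ * (ρ h)⁻¹ = -(d h) := eq_neg_of_add_eq_zero_right h0.symm
    calc d h⁻¹ = (ρ h)⁻¹ * (ρ h * d h⁻¹ * (ρ h)⁻¹) * ρ h := (conjfix _).symm
      _ = (ρ h)⁻¹ * (-(d h)) * ρ h := by rw [h1]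
  -- d g'
  have hdg' : d g' = d h + ρ h * d g * (ρ h)⁻¹
      + (ρ h * ρ g) * ((ρ h)⁻¹ * (-(d h)) * ρ h) * ((ρ g)⁻¹ * (ρ h)⁻¹) := by
    have e1 : d g' = d (h * g) + Ad (ρ (h * g)) (d h⁻¹) := by
      rw [hconj]; exact hcoc (h * g) h⁻¹
    rw [e1, hcoc h g, hdinv, Ad, Ad, _root_.map_mul ρ h g, Matrix.mul_inv_rev]
  -- conclude
  suffices hS : ((d g') * P').trace = ((d g) * P).trace by
    unfold ip; rw [hS]
  rw [hdg', hPP']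
  exact key_trace (ρ h) (ρ h)⁻¹ (ρ g) (ρ g)⁻¹ (d g) (d h) P hA1 hA2 hB1 hB2 hBP
end

section
/- Let G be a group and ρ : G → SU(2) an irreducible representation (i.e. the image ρ(G) is not an abelian subgroup of SU(2)). Then the map su(2) → Inn_ρ(G), a ↦ (g ↦ a - Ad_{ρ(g)}(a)), is a linear isomorphism; in particular the space of inner (Ad∘ρ)-twisted derivations has dimension 3. -/
open Matrix

/-- The real vector space `su(2)` of trace-zero skew-Hermitian 2×2 complex matrices. -/
noncomputable def su2 : Submodule ℝ (Matrix (Fin 2) (Fin 2) ℂ) where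
  carrier := {x | xᴴ = -x ∧ x.trace = 0}
  add_mem' := by
    rintro x y ⟨hx1, hx2⟩ ⟨hy1, hy2⟩
    refine ⟨?_, ?_⟩
    · rw [conjTranspose_add, hx1, hy1]; abel
    · rw [trace_add, hx2, hy2]; ring
  zero_mem' := by refine ⟨?_, ?_⟩ <;> simp
  smul_mem' := by
    rintro r x ⟨hx1, hx2⟩
    refine ⟨?_, ?_⟩
    · rw [conjTranspose_smul, hx1]; simp
    · rw [trace_smul, hx2]; simp

/-- The linear map sending `a ∈ su(2)` to the inner derivation
`g ↦ a - Ad_{ρ(g)}(a)`. -/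
noncomputable def innerDer {G : Type} [Group G] (ρ : G →* Matrix (Fin 2) (Fin 2) ℂ) :
    su2 →ₗ[ℝ] (G → Matrix (Fin 2) (Fin 2) ℂ) where
  toFun a := fun g => (a : Matrix (Fin 2) (Fin 2) ℂ) - ρ g * a * (ρ g)⁻¹
  map_add' a b := by
    funext g
    simp only [Submodule.coe_add, Pi.add_apply]
    rw [Matrix.mul_add, Matrix.add_mul]
    abel
  map_smul' r a := by
    funext g
    simp only [Submodule.coe_smul, RingHom.id_apply, Pi.smul_apply]
    rw [Matrix.mul_smul, Matrix.smul_mul, smul_sub]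

/-- If `a` is a nonzero element of su(2) and `x, y` both commute with `a`,
then `x` and `y` commute. -/
lemma comm_of_comm_su2 (a : Matrix (Fin 2) (Fin 2) ℂ) (ha1 : aᴴ = -a)
    (ha2 : a.trace = 0) (ha : a ≠ 0) (x y : Matrix (Fin 2) (Fin 2) ℂ)
    (hx : x * a = a * x) (hy : y * a = a * y) : x * y = y * x := by
  set d := a 0 0 with hd
  set b := a 0 1 with hb
  set c := a 1 0 with hc
  have htr : a 1 1 = -d := by
    have := ha2
    rw [Matrix.trace_fin_two] at this
    linear_combination this
  have hcb : c = -(starRingEnd ℂ) b := by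
    have := congrFun (congrFun ha1 1) 0
    simp [Matrix.conjTranspose_apply] at this
    rw [hc, hb]
    linear_combination this
  -- entrywise commuting equations
  have ex := fun i j => congrFun (congrFun hx i) j
  have ey := fun i j => congrFun (congrFun hy i) j
  have hx00 := ex 0 0; have hx01 := ex 0 1; have hx10 := ex 1 0
  have hy00 := ey 0 0; have hy01 := ey 0 1; have hy10 := ey 1 0
  simp only [Matrix.mul_apply, Fin.sum_univ_two, htr, ← hd, ← hb, ← hc] at hx00 hx01 hx10 hy00 hy01 hy10
  set p := x 0 0; set q := x 0 1; set r := x 1 0; set s := x 1 1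
  set P := y 0 0; set Q := y 0 1; set R := y 1 0; set S := y 1 1
  -- if b = 0 and d = 0 then a = 0
  have hbd : b ≠ 0 ∨ d ≠ 0 := by
    by_contra h
    push_neg at h
    obtain ⟨h1, h2⟩ := h
    apply ha
    ext i j
    fin_cases i <;> fin_cases j <;>
      simp [← hd, ← hb, ← hc, htr, h1, h2, hcb]
  have key00 : q * R - Q * r = 0 := by
    rcases hbd with hb0 | hd0
    · have : b * (q * R - Q * r) = 0 := by linear_combination Q * hx00 - q * hy00
      rcases mul_eq_zero.mp this with h | h
      · exact absurd h hb0
      · exact h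
    · have h1 : (2 * d) * (q * R - Q * r) + b * (r * (P - S) - R * (p - s)) = 0 := by
        linear_combination r * hy01 - R * hx01
      have h2 : (2 * d) * (r * (P - S) - R * (p - s)) = 0 := by
        linear_combination (P - S) * hx10 - (p - s) * hy10
      have h3 : (2 * d) * ((2 * d) * (q * R - Q * r)) = 0 := by
        linear_combination (2 * d) * h1 - b * h2
      rcases mul_eq_zero.mp h3 with h | h
      · exact absurd (by
          have : d = 0 := by
            rcases mul_eq_zero.mp h with h' | h'
            · norm_num at h'
            · exact h'
          exact this) hd0
      · rcases mul_eq_zero.mp h with h' | h'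
        · exact absurd (by
            rcases mul_eq_zero.mp h' with h'' | h''
            · norm_num at h''
            · exact h'') hd0
        · exact h'
  have key01 : Q * (p - s) - q * (P - S) = 0 := by
    rcases hbd with hb0 | hd0
    · have : b * (Q * (p - s) - q * (P - S)) = 0 := by
        linear_combination Q * hx01 - q * hy01
      rcases mul_eq_zero.mp this with h | h
      · exact absurd h hb0
      · exact h
    · have : (2 * d) * (Q * (p - s) - q * (P - S)) = 0 := by
        linear_combination (P - S) * hx01 - (p - s) * hy01
      rcases mul_eq_zero.mp this with h | h
      · exact absurd (by
          rcases mul_eq_zero.mp h with h' | h'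
          · norm_num at h'
          · exact h') hd0
      · exact h
  have key10 : r * (P - S) - R * (p - s) = 0 := by
    rcases hbd with hb0 | hd0
    · have hc0 : c ≠ 0 := by
        rw [hcb]
        simpa using hb0
      have : c * (r * (P - S) - R * (p - s)) = 0 := by
        linear_combination R * hx10 - r * hy10
      rcases mul_eq_zero.mp this with h | h
      · exact absurd h hc0
      · exact h
    · have : (2 * d) * (r * (P - S) - R * (p - s)) = 0 := by
        linear_combination (P - S) * hx10 - (p - s) * hy10
      rcases mul_eq_zero.mp this with h | h
      · exact absurd (by
          rcases mul_eq_zero.mp h with h' | h'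
          · norm_num at h'
          · exact h') hd0
      · exact h
  ext i j
  fin_cases i <;> fin_cases j <;>
    simp only [Matrix.mul_apply, Fin.sum_univ_two, Fin.mk_zero, Fin.mk_one]
  · linear_combination key00
  · linear_combination key01
  · linear_combination key10
  · linear_combination -key00
noncomputable def su2Coords : su2 →ₗ[ℝ] (Fin 3 → ℝ) where
  toFun a := ![(a.1 0 0).im, (a.1 0 1).re, (a.1 0 1).im]
  map_add' a b := by
    funext i
    fin_cases i <;> simp
  map_smul' r a := by
    funext i
    fin_cases i <;> simp

lemma su2Coords_bijective : Function.Bijective su2Coords := by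
  constructor
  · intro a b hab
    have h := fun i => congrFun hab i
    have h0 := h 0; have h1 := h 1; have h2 := h 2
    simp [su2Coords] at h0 h1 h2
    -- real parts of diagonal are 0
    obtain ⟨ha1, ha2⟩ := a.2
    obtain ⟨hb1, hb2⟩ := b.2
    have hare : (a.1 0 0).re = 0 := by
      have := congrFun (congrFun ha1 0) 0
      simp [Matrix.conjTranspose_apply] at this
      have := congrArg Complex.re this
      simp at this
      linarith
    have hbre : (b.1 0 0).re = 0 := by
      have := congrFun (congrFun hb1 0) 0
      simp [Matrix.conjTranspose_apply] at this
      have := congrArg Complex.re this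
      simp at this
      linarith
    have e00 : a.1 0 0 = b.1 0 0 := Complex.ext (by rw [hare, hbre]) h0
    have e01 : a.1 0 1 = b.1 0 1 := Complex.ext h1 h2
    have e10 : a.1 1 0 = b.1 1 0 := by
      have ha' := congrFun (congrFun ha1 1) 0
      have hb' := congrFun (congrFun hb1 1) 0
      simp [Matrix.conjTranspose_apply] at ha' hb'
      have : -(a.1 1 0) = -(b.1 1 0) := by rw [← ha', ← hb', e01]
      simpa using this
    have e11 : a.1 1 1 = b.1 1 1 := by
      rw [Matrix.trace_fin_two] at ha2 hb2
      have : a.1 1 1 = -(a.1 0 0) := by linear_combination ha2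
      have hb' : b.1 1 1 = -(b.1 0 0) := by linear_combination hb2
      rw [this, hb', e00]
    apply Subtype.ext
    ext i j
    fin_cases i <;> fin_cases j <;> assumption
  · intro v
    refine ⟨⟨!![Complex.I * v 0, v 1 + v 2 * Complex.I;
        -v 1 + v 2 * Complex.I, -(Complex.I * v 0)], ?_, ?_⟩, ?_⟩
    · ext i j
      fin_cases i <;> fin_cases j <;>
        simp [Matrix.conjTranspose_apply, Complex.ext_iff]
    · simp [Matrix.trace_fin_two]
    · funext i
      fin_cases i <;> simp [su2Coords]
/-- if `ρ : G → SU(2)` is irreducible (non-abelian image) then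
`a ↦ (g ↦ a - Ad_{ρ(g)}(a))` is a linear isomorphism from `su(2)` onto the space
`Inn_ρ(G)` of inner derivations; in particular `Inn_ρ(G)` has dimension 3. -/
theorem stmt_7 {G : Type} [Group G] (ρ : G →* Matrix (Fin 2) (Fin 2) ℂ)
    (hρ : ∀ g, ρ g ∈ Matrix.specialUnitaryGroup (Fin 2) ℂ)
    (hirr : ¬ ∀ g h : G, ρ g * ρ h = ρ h * ρ g) :
    Function.Injective (innerDer ρ) ∧
    Module.finrank ℝ (LinearMap.range (innerDer ρ)) = 3 := by
  have hker : ∀ z : su2, innerDer ρ z = 0 → z = 0 := by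
    intro z hz
    have hcomm : ∀ g, ρ g * z.1 = z.1 * ρ g := by
      intro g
      have hdet : IsUnit (ρ g).det := by
        have := (Matrix.mem_specialUnitaryGroup_iff.mp (hρ g)).2
        rw [this]; exact isUnit_one
      have e : (z.1 : Matrix (Fin 2) (Fin 2) ℂ) - ρ g * z.1 * (ρ g)⁻¹ = 0 := by
        have := congrFun hz g
        simpa [innerDer] using this
      have e2 : (z.1 : Matrix (Fin 2) (Fin 2) ℂ) = ρ g * z.1 * (ρ g)⁻¹ :=
        sub_eq_zero.mp e
      have e3 := congrArg (fun m => m * ρ g) e2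
      rw [mul_assoc (ρ g * z.1), Matrix.nonsing_inv_mul _ hdet, mul_one] at e3
      exact e3.symm
    by_contra hne
    have hz0 : (z.1 : Matrix (Fin 2) (Fin 2) ℂ) ≠ 0 := fun h =>
      hne (Subtype.ext h)
    exact hirr fun g h =>
      comm_of_comm_su2 z.1 z.2.1 z.2.2 hz0 (ρ g) (ρ h)
        (hcomm g) (hcomm h)
  have hinj : Function.Injective (innerDer ρ) := by
    intro a b hab
    have : innerDer ρ (a - b) = 0 := by rw [map_sub, hab, sub_self]
    have := hker _ this
    exact sub_eq_zero.mp this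
  refine ⟨hinj, ?_⟩
  rw [← (LinearEquiv.ofInjective (innerDer ρ) hinj).finrank_eq,
    (LinearEquiv.ofBijective su2Coords su2Coords_bijective).finrank_eq,
    Module.finrank_fin_fun]
end

section
/- Let G be a group and ρ : G → SU(2) an irreducible representation. Then the subspace su(2)^{Ad∘ρ(G)} = {v ∈ su(2) | Ad_{ρ(g)}(v) = v for all g ∈ G} of invariant vectors is zero. -/
open Matrix

lemma key (x y z p q r s p' q' r' s' : ℂ) (hd : x^2 + y*z ≠ 0)
    (h1 : q*z = y*r) (h2 : y*(p-s) = 2*x*q) (h3 : 2*x*r = z*(p-s))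
    (h1' : q'*z = y*r') (h2' : y*(p'-s') = 2*x*q') (h3' : 2*x*r' = z*(p'-s')) :
    q*r' = r*q' ∧ q'*(p-s) = q*(p'-s') ∧ r*(p'-s') = r'*(p-s) := by
  by_cases hx : x = 0
  · have hy : y ≠ 0 := by intro h; apply hd; rw [h, hx]; ring
    have hz : z ≠ 0 := by intro h; apply hd; rw [h, hx]; ring
    have hps : p - s = 0 := by
      have : y * (p - s) = 0 := by rw [h2, hx]; ring
      exact (mul_eq_zero.mp this).resolve_left hy
    have hps' : p' - s' = 0 := by
      have : y * (p' - s') = 0 := by rw [h2', hx]; ring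
      exact (mul_eq_zero.mp this).resolve_left hy
    refine ⟨?_, ?_, ?_⟩
    · apply mul_left_cancel₀ hy
      linear_combination q'*h1 - q*h1'
    · rw [hps, hps']; ring
    · rw [hps, hps']; ring
  · have h2x : (2:ℂ) * x ≠ 0 := by simp [hx]
    refine ⟨?_, ?_, ?_⟩
    · apply mul_left_cancel₀ h2x
      linear_combination q*h3' + r*h2' + (p'-s')*h1
    · apply mul_left_cancel₀ h2x
      linear_combination (p'-s')*h2 - (p-s)*h2'
    · apply mul_left_cancel₀ h2x
      linear_combination (p'-s')*h3 - (p-s)*h3'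

/-- if `ρ : G → SU(2)` is irreducible (its image is non-abelian), then the
space of `Ad ∘ ρ`-invariant vectors `su(2)^{Ad∘ρ(G)}` is zero. -/
theorem stmt_8 {G : Type} [Group G] (ρ : G →* Matrix (Fin 2) (Fin 2) ℂ)
    (hρ : ∀ g, ρ g ∈ Matrix.specialUnitaryGroup (Fin 2) ℂ)
    (hirr : ¬ ∀ g h : G, ρ g * ρ h = ρ h * ρ g) :
    ∀ v : Matrix (Fin 2) (Fin 2) ℂ, vᴴ = -v → v.trace = 0 →
      (∀ g : G, Ad (ρ g) v = v) → v = 0 := by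
  intro v hskew htr hinv
  by_contra hv
  apply hirr
  have hconjx : (starRingEnd ℂ) (v 0 0) = -(v 0 0) := by
    have := congrFun (congrFun hskew 0) 0
    simpa [Matrix.conjTranspose_apply] using this
  have hz : v 1 0 = -(starRingEnd ℂ) (v 0 1) := by
    have h := congrFun (congrFun hskew 0) 1
    simp only [Matrix.conjTranspose_apply, Matrix.neg_apply] at h
    apply_fun (starRingEnd ℂ) at h
    simpa using h
  have h11 : v 1 1 = -(v 0 0) := by
    rw [Matrix.trace_fin_two] at htr
    linear_combination htr
  have hdet : (v 0 0)^2 + (v 0 1) * (v 1 0) ≠ 0 := by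
    rw [hz]
    intro h
    have hns : ((Complex.normSq (v 0 0) : ℂ) + (Complex.normSq (v 0 1) : ℂ)) = 0 := by
      rw [← Complex.mul_conj, ← Complex.mul_conj]
      linear_combination (v 0 0) * hconjx - h
    have hre : Complex.normSq (v 0 0) + Complex.normSq (v 0 1) = 0 := by
      exact_mod_cast hns
    have h1 : Complex.normSq (v 0 0) = 0 := by
      nlinarith [Complex.normSq_nonneg (v 0 0), Complex.normSq_nonneg (v 0 1)]
    have h2 : Complex.normSq (v 0 1) = 0 := by
      nlinarith [Complex.normSq_nonneg (v 0 0), Complex.normSq_nonneg (v 0 1)]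
    have hx0 : v 0 0 = 0 := Complex.normSq_eq_zero.mp h1
    have hy0 : v 0 1 = 0 := Complex.normSq_eq_zero.mp h2
    apply hv
    ext i j
    fin_cases i <;> fin_cases j <;>
      simp [hx0, hy0, hz, h11]
  have hcomm : ∀ g, ρ g * v = v * ρ g := by
    intro g
    have hA := hinv g
    unfold Ad at hA
    have hdet1 : (ρ g).det = 1 := ((Matrix.mem_specialUnitaryGroup_iff).mp (hρ g)).2
    have hunit : IsUnit (ρ g).det := by rw [hdet1]; exact isUnit_one
    calc ρ g * v = ρ g * v * ((ρ g)⁻¹ * ρ g) := by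
          rw [Matrix.nonsing_inv_mul _ hunit, mul_one]
      _ = (ρ g * v * (ρ g)⁻¹) * ρ g := by rw [mul_assoc, mul_assoc, mul_assoc]
      _ = v * ρ g := by rw [hA]
  have hrel : ∀ g, (ρ g 0 1)*(v 1 0) = (v 0 1)*(ρ g 1 0) ∧
      (v 0 1)*((ρ g 0 0) - (ρ g 1 1)) = 2*(v 0 0)*(ρ g 0 1) ∧
      2*(v 0 0)*(ρ g 1 0) = (v 1 0)*((ρ g 0 0)-(ρ g 1 1)) := by
    intro g
    have h := hcomm g
    have e00 := congrFun (congrFun h 0) 0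
    have e01 := congrFun (congrFun h 0) 1
    have e10 := congrFun (congrFun h 1) 0
    simp only [Matrix.mul_apply, Fin.sum_univ_two] at e00 e01 e10
    refine ⟨by linear_combination e00, by linear_combination e01 - (ρ g 0 1)*h11,
      by linear_combination e10 + (ρ g 1 0)*h11⟩
  intro g h'
  obtain ⟨a1, a2, a3⟩ := hrel g
  obtain ⟨b1, b2, b3⟩ := hrel h'
  obtain ⟨k1, k2, k3⟩ := key (v 0 0) (v 0 1) (v 1 0) (ρ g 0 0) (ρ g 0 1) (ρ g 1 0) (ρ g 1 1)
    (ρ h' 0 0) (ρ h' 0 1) (ρ h' 1 0) (ρ h' 1 1) hdet a1 a2 a3 b1 b2 b3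
  ext i j
  fin_cases i <;> fin_cases j <;>
    simp only [Matrix.mul_apply, Fin.sum_univ_two, Fin.isValue, Fin.zero_eta, Fin.mk_one]
  · linear_combination k1
  · linear_combination k2
  · linear_combination k3
  · linear_combination -k1
end

section
/- Let G_q = ⟨x, y | x² = y^q⟩ with q > 0 odd be the group of the (2,q) torus knot. For 0 < t < 1 and ℓ ∈ {1, …, (q-1)/2}, the assignments x ↦ i and y ↦ cos((2ℓ-1)π/q) + sin((2ℓ-1)π/q)(cos(πt)·i + sin(πt)·j) define a group homomorphism ρ_{ℓ,t} : G_q → SU(2), and this representation is irreducible (its image is non-abelian). -/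
/-- The relation `x² y^{-q}` of the `(2,q)` torus knot group `G_q = ⟨x, y ∣ x² = y^q⟩`;
`x` is `FreeGroup.of true`, `y` is `FreeGroup.of false`. -/
def torusRels (q : ℕ) : Set (FreeGroup Bool) :=
  {FreeGroup.of true ^ 2 * (FreeGroup.of false ^ q)⁻¹}

/-- The `(2,q)` torus knot group `G_q = ⟨x, y ∣ x² = y^q⟩`. -/
def TorusGroup (q : ℕ) := PresentedGroup (torusRels q)

instance (q : ℕ) : Group (TorusGroup q) := by unfold TorusGroup; infer_instance

/-!
Write `Y = cos θ + sin θ · u` with `θ = (2ℓ-1)π/q` and `u = cos(πt) i + sin(πt) j`. Since `u² = -1`,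
`ℝ[u]` is a copy of `ℂ`, so de Moivre gives `Y^q = cos(qθ) + sin(qθ) u = -1`, `qθ` being an odd
multiple of `π`; also `i² = -1`. Hence `x ↦ i`, `y ↦ Y` respects `x² = y^q`, and as `i` and `Y` are
roots of `-1` they have norm one, so the representation lands in the unit sphere. It is irreducible
because `i` commutes only with `ℝ + ℝi`, while the `j`-coordinate `sin θ sin(πt)` of `Y` is nonzero
for `0 < θ < π` and `0 < t < 1`.
-/

open Real Metric Quaternion

theorem norm_eq_one_of_pow_eq_neg_one {𝕜 : Type*} [NormedDivisionRing 𝕜] {x : 𝕜} {n : ℕ}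
    (hn : n ≠ 0) (h : x ^ n = -1) : ‖x‖ = 1 := by
  have h_norm := congrArg norm h
  rw [norm_pow, norm_neg, norm_one] at h_norm
  exact (pow_eq_one_iff_of_nonneg (norm_nonneg x) hn).mp h_norm

theorem cos_add_sin_smul_pow {A : Type*} [Ring A] [Algebra ℝ A] {u : A} (hu : u * u = -1)
    (θ : ℝ) (n : ℕ) :
    (algebraMap ℝ A (cos θ) + sin θ • u) ^ n = algebraMap ℝ A (cos (n * θ)) + sin (n * θ) • u := by
  have h_exp (φ : ℝ) :
      Complex.liftAux u hu (Complex.exp (φ * Complex.I)) = algebraMap ℝ A (cos φ) + sin φ • u := by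
    rw [Complex.liftAux_apply, Complex.exp_ofReal_mul_I_re, Complex.exp_ofReal_mul_I_im]
  rw [← h_exp, ← h_exp, ← map_pow, ← Complex.exp_nat_mul]
  push_cast
  ring_nf

namespace Quaternion

theorem mk_cos_sin_pow {a b c : ℝ} (h : a ^ 2 + b ^ 2 + c ^ 2 = 1) (θ : ℝ) (n : ℕ) :
    (⟨cos θ, sin θ * a, sin θ * b, sin θ * c⟩ : Quaternion ℝ) ^ n =
      ⟨cos (n * θ), sin (n * θ) * a, sin (n * θ) * b, sin (n * θ) * c⟩ := by
  -- Work in `ℍ[ℝ,-1,0,-1]`, the type anonymous constructors elaborate to: mixed with the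
  -- `Quaternion` instances of `+` and `•` they block `simp`.
  let u : ℍ[ℝ,-1,0,-1] := ⟨0, a, b, c⟩
  have hu : u * u = -1 := by
    ext <;> simp [u, QuaternionAlgebra.mk_mul_mk] <;> linarith
  have h_mk (φ : ℝ) : (⟨cos φ, sin φ * a, sin φ * b, sin φ * c⟩ : ℍ[ℝ,-1,0,-1]) =
      algebraMap ℝ _ (cos φ) + sin φ • u := by
    ext <;> simp [u]
  exact h_mk θ ▸ h_mk (n * θ) ▸ cos_add_sin_smul_pow hu θ n

theorem mk_cos_sin_pow_eq_neg_one {a b c : ℝ} (h : a ^ 2 + b ^ 2 + c ^ 2 = 1) {θ : ℝ}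
    {n m : ℕ} (hm : Odd m) (hθ : n * θ = m * π) :
    (⟨cos θ, sin θ * a, sin θ * b, sin θ * c⟩ : Quaternion ℝ) ^ n = -1 := by
  rw [mk_cos_sin_pow h, hθ, cos_nat_mul_pi, sin_nat_mul_pi, hm.neg_one_pow]
  ext <;> simp

theorem not_commute_i_of_imJ_ne_zero {y : Quaternion ℝ} (hy : y.imJ ≠ 0) :
    ¬ Commute (⟨0, 1, 0, 0⟩ : Quaternion ℝ) y := by
  obtain ⟨r, a, b, c⟩ := y
  intro h
  have h_imK : b = -b := by
    simpa [QuaternionAlgebra.mk_mul_mk] using congrArg QuaternionAlgebra.imK h.eq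
  exact hy (by linarith)

end Quaternion

namespace TorusGroup

variable {q : ℕ} {G : Type*} [Group G]

def lift (X Y : G) (h : X ^ 2 = Y ^ q) : TorusGroup q →* G :=
  PresentedGroup.toGroup (f := fun b => if b then X else Y) <| by
    rintro _ rfl
    simp [h]

@[simp]
theorem lift_of_true (X Y : G) (h : X ^ 2 = Y ^ q) :
    lift X Y h (PresentedGroup.of true) = X :=
  PresentedGroup.toGroup.of _

@[simp]
theorem lift_of_false (X Y : G) (h : X ^ 2 = Y ^ q) :
    lift X Y h (PresentedGroup.of false) = Y :=
  PresentedGroup.toGroup.of _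

theorem exists_hom_norm_eq_one {𝕜 : Type*} [NormedDivisionRing 𝕜] {X Y : 𝕜}
    (hq : q ≠ 0) (hX : X ^ 2 = -1) (hY : Y ^ q = -1) :
    ∃ φ : TorusGroup q →* 𝕜, φ (PresentedGroup.of true) = X ∧
      φ (PresentedGroup.of false) = Y ∧ ∀ g, ‖φ g‖ = 1 := by
  let X' : sphere (0 : 𝕜) 1 :=
    ⟨X, mem_sphere_zero_iff_norm.2 (norm_eq_one_of_pow_eq_neg_one two_ne_zero hX)⟩
  let Y' : sphere (0 : 𝕜) 1 :=
    ⟨Y, mem_sphere_zero_iff_norm.2 (norm_eq_one_of_pow_eq_neg_one hq hY)⟩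
  have h : X' ^ 2 = Y' ^ q := Subtype.ext <| by
    simp only [unitSphere.coe_pow, X', Y', hX, hY]
  exact ⟨(Submonoid.unitSphere 𝕜).subtype.comp (lift X' Y' h),
    congrArg Subtype.val (lift_of_true X' Y' h), congrArg Subtype.val (lift_of_false X' Y' h),
    fun g => mem_sphere_zero_iff_norm.1 (lift X' Y' h g).2⟩

end TorusGroup

theorem sin_two_mul_sub_one_mul_pi_div_pos {q ℓ : ℕ} (hℓ1 : 1 ≤ ℓ) (hℓ2 : ℓ ≤ (q - 1) / 2) :
    0 < sin ((2 * ℓ - 1) * π / q) := by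
  have hℓ : (1 : ℝ) ≤ ℓ := by exact_mod_cast hℓ1
  have hq : (2 * ℓ + 1 : ℝ) ≤ q := by exact_mod_cast (by omega : 2 * ℓ + 1 ≤ q)
  apply sin_pos_of_pos_of_lt_pi
  · exact div_pos (mul_pos (by linarith) pi_pos) (by linarith)
  · rw [div_lt_iff₀ (by linarith)]
    nlinarith [pi_pos]

theorem stmt_16_general (q : ℕ)
    (ℓ : ℕ) (hℓ1 : 1 ≤ ℓ) (hℓ2 : ℓ ≤ (q - 1) / 2)
    (t : ℝ) (ht0 : 0 < t) (ht1 : t < 1) :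
    ∃ φ : TorusGroup q →* Quaternion ℝ,
      φ (PresentedGroup.of true) = (⟨0, 1, 0, 0⟩ : Quaternion ℝ) ∧
      φ (PresentedGroup.of false) =
        (⟨Real.cos ((2 * ℓ - 1) * Real.pi / q),
          Real.sin ((2 * ℓ - 1) * Real.pi / q) * Real.cos (Real.pi * t),
          Real.sin ((2 * ℓ - 1) * Real.pi / q) * Real.sin (Real.pi * t), 0⟩ : Quaternion ℝ) ∧
      (∀ g, ‖φ g‖ = 1) ∧
      ¬ (∀ g h : TorusGroup q, φ g * φ h = φ h * φ g) := by
  have hq : q ≠ 0 := by omega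
  set θ := (2 * ℓ - 1) * π / q with hθ
  set Y : Quaternion ℝ := ⟨cos θ, sin θ * cos (π * t), sin θ * sin (π * t), 0⟩
  have hX : (⟨0, 1, 0, 0⟩ : Quaternion ℝ) ^ 2 = -1 := by
    ext <;> simp [sq, QuaternionAlgebra.mk_mul_mk]
  have hY : Y ^ q = -1 := by
    have h_unit : cos (π * t) ^ 2 + sin (π * t) ^ 2 + 0 ^ 2 = 1 := by simp
    have h_odd : Odd (2 * ℓ - 1) := ⟨ℓ - 1, by omega⟩
    have h_angle : q * θ = (2 * ℓ - 1 : ℕ) * π := by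
      rw [hθ, Nat.cast_sub (by omega)]
      field_simp
      push_cast
      ring
    have h_pow := mk_cos_sin_pow_eq_neg_one h_unit h_odd h_angle
    rwa [mul_zero] at h_pow
  obtain ⟨φ, hφX, hφY, hφ_norm⟩ :=
    TorusGroup.exists_hom_norm_eq_one (𝕜 := Quaternion ℝ) hq hX hY
  refine ⟨φ, hφX, hφY, hφ_norm, fun h_comm => ?_⟩
  have hs := sin_two_mul_sub_one_mul_pi_div_pos hℓ1 hℓ2
  have hb : 0 < sin (π * t) := sin_pos_of_pos_of_lt_pi (by positivity) (by nlinarith [pi_pos])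
  refine not_commute_i_of_imJ_ne_zero (y := Y) (mul_pos hs hb).ne' ?_
  have h_gen := h_comm (PresentedGroup.of true) (PresentedGroup.of false)
  rwa [hφX, hφY] at h_gen

/-- for `q > 0` odd, `0 < t < 1` and `1 ≤ ℓ ≤ (q-1)/2`, the assignments
`x ↦ i` and `y ↦ cos((2ℓ-1)π/q) + sin((2ℓ-1)π/q)(cos(πt)·i + sin(πt)·j)` define a
representation `ρ_{ℓ,t} : G_q → SU(2)` (unit quaternions), and this representation is
irreducible (non-abelian image). -/
theorem stmt_16 (q : ℕ) (hq : Odd q) (hq0 : 0 < q)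
    (ℓ : ℕ) (hℓ1 : 1 ≤ ℓ) (hℓ2 : ℓ ≤ (q - 1) / 2)
    (t : ℝ) (ht0 : 0 < t) (ht1 : t < 1) :
    ∃ φ : TorusGroup q →* Quaternion ℝ,
      φ (PresentedGroup.of true) = (⟨0, 1, 0, 0⟩ : Quaternion ℝ) ∧
      φ (PresentedGroup.of false) =
        (⟨Real.cos ((2 * ℓ - 1) * Real.pi / q),
          Real.sin ((2 * ℓ - 1) * Real.pi / q) * Real.cos (Real.pi * t),
          Real.sin ((2 * ℓ - 1) * Real.pi / q) * Real.sin (Real.pi * t), 0⟩ : Quaternion ℝ) ∧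
      (∀ g, ‖φ g‖ = 1) ∧
      ¬ (∀ g h : TorusGroup q, φ g * φ h = φ h * φ g) :=
  stmt_16_general q ℓ hℓ1 hℓ2 t ht0 ht1
end

section
/- With G_q = ⟨x, y | x² = y^q⟩, q odd, and ρ_{ℓ,t} : G_q → SU(2) the representation with ρ_{ℓ,t}(x) = i and ρ_{ℓ,t}(y) = cos((2ℓ-1)π/q) + sin((2ℓ-1)π/q)(cos(πt)i + sin(πt)j), the meridian m = x y^{(1-q)/2} satisfies Tr(ρ_{ℓ,t}(m)) = 2(-1)^{ℓ-1} cos((2ℓ-1)π/(2q)) cos(πt). -/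
/-- The meridian `m = x · y^{(1-q)/2}` of the `(2,q)` torus knot. -/
def meridian (q : ℕ) : TorusGroup q :=
  PresentedGroup.of true * PresentedGroup.of false ^ ((1 - (q : ℤ)) / 2)

/-!
Write `q = 2n + 1` and `u = cos(πt) i + sin(πt) j`, a pure unit quaternion, so `u² = -1` and
`ρ(y) = exp(αu)` with `α = (2ℓ-1)π/q`. Then `ρ(m) = i · exp(-nαu)`, whose real part is
`sin(nα) cos(πt)`, and `nα = (2ℓ-1)π/2 - (2ℓ-1)π/(2q)` turns the sine into `±cos((2ℓ-1)π/(2q))`.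
-/

open Real Quaternion

section EulerFormula

variable {A : Type*} [Ring A] [Algebra ℝ A]

/-- Euler's formula: `β ↦ exp (β • u)` for a square root `u` of `-1`. -/
noncomputable def AddChar.cosAddSinSMul (u : A) (hu : u * u = -1) : AddChar ℝ A where
  toFun β := cos β • 1 + sin β • u
  map_zero_eq_one' := by simp
  map_add_eq_mul' a b := by
    simp only [add_mul, mul_add, smul_mul_smul_comm, one_mul, mul_one, hu, cos_add, sin_add]
    module

@[simp]
lemma AddChar.cosAddSinSMul_apply (u : A) (hu : u * u = -1) (β : ℝ) :
    cosAddSinSMul u hu β = cos β • 1 + sin β • u :=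
  rfl

end EulerFormula

lemma Quaternion.mul_self_eq_neg_one {R : Type*} [CommRing R] [LinearOrder R]
    [IsStrictOrderedRing R] {u : ℍ[R]} (hre : u.re = 0) (hnorm : normSq u = 1) :
    u * u = -1 := by
  rw [← sq, sq_eq_neg_normSq.mpr hre, hnorm, coe_one]

lemma sin_nat_mul_odd_mul_pi_div (n m : ℕ) :
    sin (n * ((2 * m + 1) * π / (2 * n + 1))) =
      (-1) ^ m * cos ((2 * m + 1) * π / (2 * (2 * n + 1))) := by
  have h : (n : ℝ) * ((2 * m + 1) * π / (2 * n + 1)) =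
      π / 2 - (2 * m + 1) * π / (2 * (2 * n + 1)) + m * π := by
    field_simp
    ring
  rw [h, sin_add_nat_mul_pi, sin_pi_div_two_sub]

lemma map_meridian {M : Type*} [DivisionMonoid M] (q : ℕ) (φ : TorusGroup q →* M) :
    φ (meridian q) =
      φ (PresentedGroup.of true) * φ (PresentedGroup.of false) ^ ((1 - (q : ℤ)) / 2) :=
  (map_mul φ _ _).trans (congrArg _ (map_zpow φ _ _))

theorem stmt_17_general (q : ℕ) (hq : Odd q)
    (ℓ : ℕ) (hℓ1 : 1 ≤ ℓ)
    (t : ℝ)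
    (φ : TorusGroup q →* Quaternion ℝ)
    (hx : φ (PresentedGroup.of true) = (⟨0, 1, 0, 0⟩ : Quaternion ℝ))
    (hy : φ (PresentedGroup.of false) =
      (⟨Real.cos ((2 * ℓ - 1) * Real.pi / q),
        Real.sin ((2 * ℓ - 1) * Real.pi / q) * Real.cos (Real.pi * t),
        Real.sin ((2 * ℓ - 1) * Real.pi / q) * Real.sin (Real.pi * t), 0⟩ : Quaternion ℝ)) :
    2 * (φ (meridian q)).re =
      2 * (-1 : ℝ) ^ (ℓ - 1) * Real.cos ((2 * ℓ - 1) * Real.pi / (2 * q)) *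
        Real.cos (Real.pi * t) := by
  obtain ⟨n, rfl⟩ := hq
  obtain ⟨m, rfl⟩ := Nat.exists_eq_add_of_le' hℓ1
  have hodd : (2 * ((m + 1 : ℕ) : ℝ) - 1) = 2 * m + 1 := by push_cast; ring
  rw [hodd] at hy ⊢
  rw [Nat.add_sub_cancel]
  -- `u` is kept abstract: the `Quaternion` simp lemmas do not fire on a literal `⟨…⟩`.
  obtain ⟨u, hre, hI, hJ, hK⟩ : ∃ u : Quaternion ℝ,
      u.re = 0 ∧ u.imI = cos (π * t) ∧ u.imJ = sin (π * t) ∧ u.imK = 0 :=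
    ⟨⟨0, cos (π * t), sin (π * t), 0⟩, rfl, rfl, rfl, rfl⟩
  have hu : u * u = -1 := mul_self_eq_neg_one hre (by simp [normSq_def', hre, hI, hJ, hK])
  have hy_euler : φ (PresentedGroup.of false) =
      AddChar.cosAddSinSMul u hu ((2 * m + 1) * π / (2 * n + 1 : ℕ)) := by
    rw [hy]
    ext <;> simp [hre, hI, hJ, hK]
  have hexponent : (1 - ((2 * n + 1 : ℕ) : ℤ)) / 2 = -(n : ℤ) := by omega
  calc 2 * (φ (meridian _)).re
      = 2 * (sin (n * ((2 * m + 1) * π / (2 * n + 1))) * cos (π * t)) := by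
        rw [map_meridian, re_mul, hx, hy_euler, ← AddChar.map_zsmul_eq_zpow, hexponent]
        simp [hI]
    _ = _ := by
        rw [sin_nat_mul_odd_mul_pi_div]
        push_cast
        ring

/-- for the representation `ρ_{ℓ,t}` of `G_q` (unit quaternions ≅ SU(2))
with `ρ_{ℓ,t}(x) = i` and `ρ_{ℓ,t}(y) = cos((2ℓ-1)π/q) + sin((2ℓ-1)π/q)(cos(πt)i + sin(πt)j)`,
the meridian `m = x y^{(1-q)/2}` satisfies
`Tr(ρ_{ℓ,t}(m)) = 2(-1)^{ℓ-1} cos((2ℓ-1)π/(2q)) cos(πt)`, where `Tr(A) = 2 re(A)`. -/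
theorem stmt_17 (q : ℕ) (hq : Odd q) (hq0 : 0 < q)
    (ℓ : ℕ) (hℓ1 : 1 ≤ ℓ) (hℓ2 : ℓ ≤ (q - 1) / 2)
    (t : ℝ) (ht0 : 0 < t) (ht1 : t < 1)
    (φ : TorusGroup q →* Quaternion ℝ)
    (hx : φ (PresentedGroup.of true) = (⟨0, 1, 0, 0⟩ : Quaternion ℝ))
    (hy : φ (PresentedGroup.of false) =
      (⟨Real.cos ((2 * ℓ - 1) * Real.pi / q),
        Real.sin ((2 * ℓ - 1) * Real.pi / q) * Real.cos (Real.pi * t),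
        Real.sin ((2 * ℓ - 1) * Real.pi / q) * Real.sin (Real.pi * t), 0⟩ : Quaternion ℝ)) :
    2 * (φ (meridian q)).re =
      2 * (-1 : ℝ) ^ (ℓ - 1) * Real.cos ((2 * ℓ - 1) * Real.pi / (2 * q)) *
        Real.cos (Real.pi * t) :=
  stmt_17_general q hq ℓ hℓ1 t φ hx hy
end
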